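/- arXiv:2210.08082 — 2 statements merged into one kernel-verified Lean document; each statement's English description precedes it below -/
import Mathlib

section
/- If a subset Q ⊆ S(W) is a suspension from a linear subspace U and U ⊆ V, then Q is a suspension from V. -/
/-!
Since `U ≤ V`, `P_U ∘ P_V = P_U`. Hence for a unit vector `x` with `P_V x ≠ 0`, the unit vector
`y = ‖P_V x‖⁻¹ • P_V x ∈ V` satisfies `P_U y = ‖P_V x‖⁻¹ • P_U x`. Membership of a unit vector in a
suspension from `U` depends only on the ray of its projection to `U`, so `x ∈ Q ↔ y ∈ Q`; and if
`P_V x = 0` then `P_U x = 0`, so `x ∈ Q`.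
-/

variable {W : Type*} [NormedAddCommGroup W] [InnerProductSpace ℝ W] [FiniteDimensional ℝ W]

/-- The suspension of a subset `P` of the unit sphere `S(W)` from a linear subspace `V ⊆ W`:
the set of unit vectors `x` such that the orthogonal projection `P_V x` of `x` to `V` is zero,
or is nonzero and normalizes to a point of `P`. -/
noncomputable def susp (V : Submodule ℝ W) (P : Set W) : Set W :=
  {x : W | ‖x‖ = 1 ∧
    (((V.orthogonalProjection x : W) = 0) ∨
      ((V.orthogonalProjection x : W) ≠ 0 ∧
        ‖(V.orthogonalProjection x : W)‖⁻¹ • (V.orthogonalProjection x : W) ∈ P))}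

/-- `Q ⊆ S(W)` is a suspension from the linear subspace `V` if `Q = Susp_V(Q ∩ V)`. -/
def IsSuspensionFrom (Q : Set W) (V : Submodule ℝ W) : Prop :=
  Q = susp V (Q ∩ (V : Set W))

theorem inv_norm_smul_smul_of_pos {E : Type*} [NormedAddCommGroup E] [NormedSpace ℝ E]
    {c : ℝ} (hc : 0 < c) (v : E) : ‖c • v‖⁻¹ • (c • v) = ‖v‖⁻¹ • v := by
  rw [norm_smul, Real.norm_of_nonneg hc.le, smul_smul, mul_inv_rev, mul_assoc,
    inv_mul_cancel₀ hc.ne', mul_one]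

theorem Submodule.starProjection_starProjection_of_le {𝕜 E : Type*} [RCLike 𝕜]
    [NormedAddCommGroup E] [InnerProductSpace 𝕜 E] {U V : Submodule 𝕜 E}
    [U.HasOrthogonalProjection] [V.HasOrthogonalProjection] (h : U ≤ V) (x : E) :
    U.starProjection (V.starProjection x) = U.starProjection x :=
  congr($(Submodule.starProjection_comp_starProjection_of_le h) x)

theorem mem_susp_iff {V : Submodule ℝ W} {P : Set W} {x : W} :
    x ∈ susp V P ↔ ‖x‖ = 1 ∧ (V.starProjection x = 0 ∨
      V.starProjection x ≠ 0 ∧ ‖V.starProjection x‖⁻¹ • V.starProjection x ∈ P) :=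
  Iff.rfl

theorem mem_susp_iff_of_starProjection_eq_smul {V : Submodule ℝ W} {P : Set W} {x y : W} {c : ℝ}
    (hc : 0 < c) (hxy : ‖y‖ = ‖x‖) (h : V.starProjection y = c • V.starProjection x) :
    y ∈ susp V P ↔ x ∈ susp V P := by
  simp only [mem_susp_iff, h, hxy, ne_eq, smul_eq_zero, hc.ne', false_or,
    inv_norm_smul_smul_of_pos hc]

namespace IsSuspensionFrom

variable {Q : Set W} {U V : Submodule ℝ W} {x : W}

theorem norm_eq_one (hQ : IsSuspensionFrom Q U) (hx : x ∈ Q) : ‖x‖ = 1 := by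
  rw [hQ] at hx
  exact hx.1

theorem mem_of_starProjection_eq_zero (hQ : IsSuspensionFrom Q U) (hx : ‖x‖ = 1)
    (h : U.starProjection x = 0) : x ∈ Q := by
  rw [hQ]
  exact ⟨hx, Or.inl h⟩

theorem inv_norm_smul_starProjection_mem_iff (hQ : IsSuspensionFrom Q U) (hUV : U ≤ V)
    (hx : ‖x‖ = 1) (h : V.starProjection x ≠ 0) :
    ‖V.starProjection x‖⁻¹ • V.starProjection x ∈ Q ↔ x ∈ Q := by
  rw [hQ]
  refine mem_susp_iff_of_starProjection_eq_smul (inv_pos.2 (norm_pos_iff.2 h)) ?_ ?_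
  · rw [hx, norm_smul, norm_inv, norm_norm, inv_mul_cancel₀ (norm_ne_zero_iff.2 h)]
  · rw [map_smul, U.starProjection_starProjection_of_le hUV]

end IsSuspensionFrom

/-- If `Q ⊆ S(W)` is a suspension from `U` and `U ⊆ V`, then `Q` is a suspension from `V`. -/
theorem isSuspensionFrom_of_le {Q : Set W} {U V : Submodule ℝ W}
    (hQ : IsSuspensionFrom Q U) (hUV : U ≤ V) : IsSuspensionFrom Q V := by
  ext x
  rw [mem_susp_iff]
  constructor
  · intro hx
    refine ⟨hQ.norm_eq_one hx, or_iff_not_imp_left.2 fun h ↦ ⟨h, ?_, ?_⟩⟩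
    · exact (hQ.inv_norm_smul_starProjection_mem_iff hUV (hQ.norm_eq_one hx) h).2 hx
    · exact V.smul_mem _ (V.starProjection_apply_mem x)
  · rintro ⟨hx, h | ⟨h, hmem, -⟩⟩
    · refine hQ.mem_of_starProjection_eq_zero hx ?_
      rw [← U.starProjection_starProjection_of_le hUV, h, map_zero]
    · exact (hQ.inv_norm_smul_starProjection_mem_iff hUV hx h).1 hmem
end

section
/- If a subset Q ⊆ S(W) is a suspension from a linear subspace U and also a suspension from a linear subspace V, then Q is a suspension from the intersection U ∩ V. -/
/-!
Membership of a unit vector `x` in a suspension `Q` from `V` depends only on the direction of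
`P_V x`. Given `x` with `P_U x ≠ 0`, the identity `(U ⊓ V)ᗮ = Uᗮ ⊔ Vᗮ` lets us move `x` along
`Uᗮ` to a vector `y` with `P_U y = P_U x` and `P_V y = P_{U ⊓ V} x`. Suspending from `U` gives
`x ∈ Q ↔ y/‖y‖ ∈ Q`, and suspending from `V` gives `y/‖y‖ ∈ Q ↔` the direction of `P_{U ⊓ V} x`
lies in `Q`, which is what a suspension from `U ⊓ V` requires.
-/

variable {W : Type*} [NormedAddCommGroup W] [InnerProductSpace ℝ W] [FiniteDimensional ℝ W]

open Submodule

section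

variable {𝕜 E : Type*} [RCLike 𝕜] [NormedAddCommGroup E] [InnerProductSpace 𝕜 E]
  [FiniteDimensional 𝕜 E]

theorem Submodule.sup_orthogonal_of_finiteDimensional (K₁ K₂ : Submodule 𝕜 E) :
    K₁ᗮ ⊔ K₂ᗮ = (K₁ ⊓ K₂)ᗮ := by
  rw [← orthogonal_orthogonal (K₁ᗮ ⊔ K₂ᗮ), ← inf_orthogonal, orthogonal_orthogonal,
    orthogonal_orthogonal]

theorem Submodule.exists_starProjection_eq_and_starProjection_eq_inf (U V : Submodule 𝕜 E)
    (x : E) : ∃ y, U.starProjection y = U.starProjection x ∧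
      V.starProjection y = (U ⊓ V).starProjection x := by
  obtain ⟨z, hz, w, hw, hzw⟩ : ∃ z ∈ Uᗮ, ∃ w ∈ Vᗮ, z + w = x - (U ⊓ V).starProjection x := by
    rw [← mem_sup, sup_orthogonal_of_finiteDimensional]
    exact sub_starProjection_mem_orthogonal x
  have hy : x - z = (U ⊓ V).starProjection x + w := by
    rw [sub_eq_iff_eq_add', add_left_comm, hzw, add_sub_cancel]
  refine ⟨x - z, ?_, ?_⟩
  · rw [map_sub, (starProjection_apply_eq_zero_iff U).mpr hz, sub_zero]
  · rw [hy, map_add, (starProjection_apply_eq_zero_iff V).mpr hw, add_zero,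
      starProjection_eq_self_iff.mpr (starProjection_apply_mem (U ⊓ V) x).2]

end

theorem NormedSpace.normalize_map_normalize {E F : Type*} [NormedAddCommGroup E] [NormedSpace ℝ E]
    [NormedAddCommGroup F] [NormedSpace ℝ F] (f : E →L[ℝ] F) (x : E) :
    normalize (f (normalize x)) = normalize (f x) := by
  rcases eq_or_ne x 0 with rfl | hx
  · simp
  · rw [show normalize x = ‖x‖⁻¹ • x from rfl, map_smul,
      normalize_smul_of_pos (inv_pos.mpr (norm_pos_iff.mpr hx))]

/-- Since `normalize 0 = 0`, the case `P_V x = 0` of `susp` is absorbed by `insert 0 Q`. -/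
theorem isSuspensionFrom_iff {Q : Set W} {V : Submodule ℝ W} :
    IsSuspensionFrom Q V ↔
      ∀ x, x ∈ Q ↔ ‖x‖ = 1 ∧ NormedSpace.normalize (V.starProjection x) ∈ insert 0 Q := by
  refine Set.ext_iff.trans (forall_congr' fun x => iff_congr Iff.rfl (and_congr Iff.rfl ?_))
  have hV : NormedSpace.normalize (V.starProjection x) ∈ V :=
    V.smul_mem _ (starProjection_apply_mem V x)
  rcases eq_or_ne (V.starProjection x) 0 with h | h
  · simp [h]
  · simp only [coe_orthogonalProjectionOnto_apply, h, false_or, ne_eq, not_false_eq_true,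
      true_and, Set.mem_insert_iff, NormedSpace.normalize_eq_zero_iff]
    exact and_iff_left hV

/-- If `Q ⊆ S(W)` is a suspension from `U` and also a suspension from `V`, then `Q` is a
suspension from the intersection `U ∩ V`. -/
theorem isSuspensionFrom_inf {Q : Set W} {U V : Submodule ℝ W}
    (hU : IsSuspensionFrom Q U) (hV : IsSuspensionFrom Q V) :
    IsSuspensionFrom Q (U ⊓ V) := by
  rw [isSuspensionFrom_iff] at hU hV ⊢
  refine fun x => (hU x).trans (and_congr_right fun _ => ?_)
  by_cases hUx : U.starProjection x = 0
  · have hx : x ∈ (U ⊓ V)ᗮ :=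
      orthogonal_le inf_le_left ((starProjection_apply_eq_zero_iff U).mp hUx)
    simp [hUx, (starProjection_apply_eq_zero_iff _).mpr hx]
  obtain ⟨y, hyU, hyV⟩ := exists_starProjection_eq_and_starProjection_eq_inf U V x
  have hy : y ≠ 0 := by rintro rfl; exact hUx (by rw [← hyU, map_zero])
  have hy1 : ‖NormedSpace.normalize y‖ = 1 := NormedSpace.norm_normalize_eq_one_iff.mpr hy
  rw [← hyU, ← hyV, ← NormedSpace.normalize_map_normalize U.starProjection,
    ← NormedSpace.normalize_map_normalize V.starProjection]
  simpa only [hy1, true_and] using (hU (NormedSpace.normalize y)).symm.trans (hV _)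
end
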